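/- arXiv:2312.15520 — 4 statements merged into one kernel-verified Lean document; each statement's English description precedes it below -/
import Mathlib

section
/- Theorem 1 (merge cost upper bound): cost(u,v) ≤ ‖h u − h'_{uv}‖₁ + ‖h v − h'_{uv}‖₁ + ‖x̃_{uv} − x̃ u‖₁ · ∑_{i ∉ {u,v}} a u i / √(d i + c i) + ‖x̃_{uv} − x̃ v‖₁ · ∑_{i ∉ {u,v}} a v i / √(d i + c i). -/
open Finset

/-- ℓ¹ norm on `Fin f → ℝ`. -/
noncomputable def norm1 {f : ℕ} (w : Fin f → ℝ) : ℝ := ∑ k, |w k|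

/-- Coarse graph convolution representation of node `i`. -/
noncomputable def hrep {V : Type*} [Fintype V] [DecidableEq V] {f : ℕ}
    (x : V → Fin f → ℝ) (a : V → V → ℝ) (c d : V → ℝ) (i : V) : Fin f → ℝ :=
  (c i / (d i + c i)) • x i +
    (1 / Real.sqrt (d i + c i)) •
      ∑ j ∈ ({i} : Finset V)ᶜ, (a j i / Real.sqrt (d j + c j)) • x j

/-- Feature of the supernode obtained by merging `u` and `v`. -/
noncomputable def xmerge {V : Type*} {f : ℕ}
    (x : V → Fin f → ℝ) (c : V → ℝ) (u v : V) : Fin f → ℝ :=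
  (1 / (c u + c v)) • (c u • x u + c v • x v)

/-- Post-merge representation of the supernode `(u,v)`. -/
noncomputable def hmerge {V : Type*} [Fintype V] [DecidableEq V] {f : ℕ}
    (x : V → Fin f → ℝ) (a : V → V → ℝ) (c d : V → ℝ) (u v : V) : Fin f → ℝ :=
  ((c u + c v) / (d u + d v + c u + c v)) • xmerge x c u v +
    (1 / Real.sqrt (d u + d v + c u + c v)) •
      ∑ j ∈ ({u, v} : Finset V)ᶜ, ((a j u + a j v) / Real.sqrt (d j + c j)) • x j

/-- Post-merge representation of a node `i ∉ {u,v}`. -/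
noncomputable def hpost {V : Type*} [Fintype V] [DecidableEq V] {f : ℕ}
    (x : V → Fin f → ℝ) (a : V → V → ℝ) (c d : V → ℝ) (u v i : V) : Fin f → ℝ :=
  (c i / (d i + c i)) • x i +
    (1 / Real.sqrt (d i + c i)) •
      (∑ j ∈ ({u, v, i} : Finset V)ᶜ, (a j i / Real.sqrt (d j + c j)) • x j +
        ((a u i + a v i) / Real.sqrt (d u + d v + c u + c v)) • xmerge x c u v)

/-- The merge cost `cost(u,v)`. -/
noncomputable def mergeCost {V : Type*} [Fintype V] [DecidableEq V] {f : ℕ}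
    (x : V → Fin f → ℝ) (a : V → V → ℝ) (c d : V → ℝ) (u v : V) : ℝ :=
  norm1 (hrep x a c d u - hmerge x a c d u v) +
    norm1 (hrep x a c d v - hmerge x a c d u v) +
    ∑ i ∈ ({u, v} : Finset V)ᶜ, norm1 (hrep x a c d i - hpost x a c d u v i)

/-- Normalized features of node `i`. -/
noncomputable def xtil {V : Type*} {f : ℕ}
    (x : V → Fin f → ℝ) (c d : V → ℝ) (i : V) : Fin f → ℝ :=
  (1 / Real.sqrt (d i + c i)) • x i

/-- Normalized features of the supernode `(u,v)`. -/
noncomputable def xtilMerge {V : Type*} {f : ℕ}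
    (x : V → Fin f → ℝ) (c d : V → ℝ) (u v : V) : Fin f → ℝ :=
  (1 / Real.sqrt (d u + d v + c u + c v)) • xmerge x c u v

/-- Cached sum statistic of node `w`. -/
noncomputable def svec {V : Type*} [Fintype V] [DecidableEq V] {f : ℕ}
    (x : V → Fin f → ℝ) (a : V → V → ℝ) (c d : V → ℝ) (w : V) : Fin f → ℝ :=
  ∑ j ∈ ({w} : Finset V)ᶜ, (a j w / Real.sqrt (d j + c j)) • x j

/-- Influence of node `w`. -/
noncomputable def infl {V : Type*} [Fintype V] [DecidableEq V]
    (a : V → V → ℝ) (c d : V → ℝ) (w : V) : ℝ :=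
  ∑ j ∈ ({w} : Finset V)ᶜ, a w j / Real.sqrt (d j + c j)

lemma norm1_smul {f : ℕ} (r : ℝ) (w : Fin f → ℝ) : norm1 (r • w) = |r| * norm1 w := by
  simp [norm1, Finset.mul_sum, abs_mul]

lemma norm1_add_le {f : ℕ} (w₁ w₂ : Fin f → ℝ) : norm1 (w₁ + w₂) ≤ norm1 w₁ + norm1 w₂ := by
  unfold norm1
  rw [← Finset.sum_add_distrib]
  exact Finset.sum_le_sum fun k _ => abs_add_le (w₁ k) (w₂ k)

lemma norm1_sub_comm {f : ℕ} (w₁ w₂ : Fin f → ℝ) : norm1 (w₁ - w₂) = norm1 (w₂ - w₁) := by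
  simp [norm1, abs_sub_comm]

lemma diff_eq {V : Type*} [Fintype V] [DecidableEq V] {f : ℕ}
    (x : V → Fin f → ℝ) (a : V → V → ℝ) (c d : V → ℝ) (u v i : V)
    (huv : u ≠ v) (hiu : i ≠ u) (hiv : i ≠ v) :
    hrep x a c d i - hpost x a c d u v i =
      (a u i / Real.sqrt (d i + c i)) • (xtil x c d u - xtilMerge x c d u v) +
      (a v i / Real.sqrt (d i + c i)) • (xtil x c d v - xtilMerge x c d u v) := by
  funext k
  have hsub : ({u, v} : Finset V) ⊆ ({i} : Finset V)ᶜ := by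
    intro j hj
    simp only [Finset.mem_insert, Finset.mem_singleton] at hj
    simp only [Finset.mem_compl, Finset.mem_singleton]
    rcases hj with rfl | rfl
    · exact fun h => hiu h.symm
    · exact fun h => hiv h.symm
  have hsd : ({i} : Finset V)ᶜ \ ({u, v} : Finset V) = ({u, v, i} : Finset V)ᶜ := by
    ext j; simp [not_or]; tauto
  have hsplit : ∑ j ∈ (({i} : Finset V)ᶜ), (a j i / Real.sqrt (d j + c j)) * x j k
      = (∑ j ∈ (({u, v, i} : Finset V)ᶜ), (a j i / Real.sqrt (d j + c j)) * x j k)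
        + ((a u i / Real.sqrt (d u + c u)) * x u k + (a v i / Real.sqrt (d v + c v)) * x v k) := by
    rw [← Finset.sum_sdiff hsub, hsd, Finset.sum_pair huv]
  simp only [hrep, hpost, xtil, xtilMerge, xmerge, Pi.sub_apply, Pi.add_apply, Pi.smul_apply,
    smul_eq_mul, Finset.sum_apply, Pi.smul_apply, Pi.add_apply, smul_eq_mul]
  rw [hsplit]
  ring

theorem merge_cost_upper_bound
    {V : Type*} [Fintype V] [DecidableEq V] {f : ℕ}
    (x : V → Fin f → ℝ) (a : V → V → ℝ)
    (hsymm : ∀ i j, a j i = a i j) (hnonneg : ∀ i j, 0 ≤ a i j)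
    (hdiag : ∀ i, a i i = 0)
    (c : V → ℝ) (hc : ∀ i, 1 ≤ c i)
    (d : V → ℝ) (hd : ∀ i, d i = ∑ j, a j i)
    (u v : V) (huv : u ≠ v) :
    mergeCost x a c d u v ≤
      norm1 (hrep x a c d u - hmerge x a c d u v) +
        norm1 (hrep x a c d v - hmerge x a c d u v) +
        norm1 (xtilMerge x c d u v - xtil x c d u) *
          ∑ i ∈ ({u, v} : Finset V)ᶜ, a u i / Real.sqrt (d i + c i) +
        norm1 (xtilMerge x c d u v - xtil x c d v) *
          ∑ i ∈ ({u, v} : Finset V)ᶜ, a v i / Real.sqrt (d i + c i) := by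
  
  unfold mergeCost
  have key : ∑ i ∈ ({u, v} : Finset V)ᶜ, norm1 (hrep x a c d i - hpost x a c d u v i) ≤
      norm1 (xtilMerge x c d u v - xtil x c d u) *
          ∑ i ∈ ({u, v} : Finset V)ᶜ, a u i / Real.sqrt (d i + c i) +
        norm1 (xtilMerge x c d u v - xtil x c d v) *
          ∑ i ∈ ({u, v} : Finset V)ᶜ, a v i / Real.sqrt (d i + c i) := by
    rw [Finset.mul_sum, Finset.mul_sum, ← Finset.sum_add_distrib]
    refine Finset.sum_le_sum fun i hi => ?_
    simp only [Finset.mem_compl, Finset.mem_insert, Finset.mem_singleton, not_or] at hi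
    rw [diff_eq x a c d u v i huv hi.1 hi.2]
    calc norm1 ((a u i / Real.sqrt (d i + c i)) • (xtil x c d u - xtilMerge x c d u v) +
          (a v i / Real.sqrt (d i + c i)) • (xtil x c d v - xtilMerge x c d u v))
        ≤ norm1 ((a u i / Real.sqrt (d i + c i)) • (xtil x c d u - xtilMerge x c d u v)) +
          norm1 ((a v i / Real.sqrt (d i + c i)) • (xtil x c d v - xtilMerge x c d u v)) :=
        norm1_add_le _ _
      _ = _ := by
        rw [norm1_smul, norm1_smul, norm1_sub_comm (xtil x c d u), norm1_sub_comm (xtil x c d v),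
          abs_of_nonneg (div_nonneg (hnonneg _ _) (Real.sqrt_nonneg _)),
          abs_of_nonneg (div_nonneg (hnonneg _ _) (Real.sqrt_nonneg _))]
        ring
  linarith [key]
end

section
/- Cost decomposition over the one-hop neighborhood: cost(u,v) = ‖h u − h'_{uv}‖₁ + ‖h v − h'_{uv}‖₁ + ∑_{i ∉ {u,v}, a u i > 0 or a v i > 0} ‖h i − h' i‖₁; that is, in the sum ∑_{i ∉ {u,v}} ‖h i − h' i‖₁ only the neighbors of u or v contribute. -/
open Finset

theorem cost_decomposition_one_hop
    {V : Type*} [Fintype V] [DecidableEq V] {f : ℕ}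
    (x : V → Fin f → ℝ) (a : V → V → ℝ)
    (hsymm : ∀ i j, a j i = a i j) (hnonneg : ∀ i j, 0 ≤ a i j)
    (hdiag : ∀ i, a i i = 0)
    (c : V → ℝ) (hc : ∀ i, 1 ≤ c i)
    (d : V → ℝ) (hd : ∀ i, d i = ∑ j, a j i)
    (u v : V) (huv : u ≠ v) :
    mergeCost x a c d u v =
      norm1 (hrep x a c d u - hmerge x a c d u v) +
        norm1 (hrep x a c d v - hmerge x a c d u v) +
        ∑ i ∈ ({u, v} : Finset V)ᶜ.filter (fun i => 0 < a u i ∨ 0 < a v i),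
          norm1 (hrep x a c d i - hpost x a c d u v i) := by

  unfold mergeCost
  congr 1
  rw [← Finset.sum_filter_add_sum_filter_not (({u,v} : Finset V)ᶜ) (fun i => 0 < a u i ∨ 0 < a v i)]
  have hz : ∀ i ∈ (({u,v} : Finset V)ᶜ).filter (fun i => ¬(0 < a u i ∨ 0 < a v i)),
      norm1 (hrep x a c d i - hpost x a c d u v i) = 0 := by
    intro i hi
    simp only [Finset.mem_filter, Finset.mem_compl, Finset.mem_insert, Finset.mem_singleton,
      not_or] at hi
    obtain ⟨hne, hu0, hv0⟩ := hi
    have hau : a u i = 0 := le_antisymm (not_lt.mp hu0) (hnonneg u i)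
    have hav : a v i = 0 := le_antisymm (not_lt.mp hv0) (hnonneg v i)
    have hsum : ∑ j ∈ ({i} : Finset V)ᶜ, (a j i / Real.sqrt (d j + c j)) • x j
        = ∑ j ∈ ({u,v,i} : Finset V)ᶜ, (a j i / Real.sqrt (d j + c j)) • x j := by
      refine (Finset.sum_subset ?_ ?_).symm
      · intro j hj
        simp only [Finset.mem_compl, Finset.mem_insert, Finset.mem_singleton, not_or] at hj ⊢
        exact hj.2.2
      · intro j hj hj2
        simp only [Finset.mem_compl, Finset.mem_singleton] at hj
        simp only [Finset.mem_compl, Finset.mem_insert, Finset.mem_singleton, not_or,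
          not_and, not_not] at hj2
        rcases Decidable.em (j = u) with h | h
        · subst h; rw [hau]; simp
        rcases Decidable.em (j = v) with h2 | h2
        · subst h2; rw [hav]; simp
        · exact absurd (by tauto) hj
    have heq : hrep x a c d i = hpost x a c d u v i := by
      unfold hrep hpost
      rw [hau, hav, hsum]
      norm_num
    rw [heq, sub_self]
    simp [norm1]
  rw [Finset.sum_eq_zero hz, add_zero]
end

section
/- Cached computation of the merged supernode representation: h'_{uv} = ((c u + c v)/(d u + d v + c u + c v)) • x_{uv} + (1/√(d u + d v + c u + c v)) • ( s u − (a v u/√(d v + c v)) • x v + s v − (a u v/√(d u + c u)) • x u ); in particular the post-merge representation of the supernode (u,v) is computable from x u, x v, x_{uv}, s u, s v and the scalar quantities a u v, d u, d v, c u, c v alone, without information from the neighbors of u and v. -/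
open Finset

theorem cached_merged_representation
    {V : Type*} [Fintype V] [DecidableEq V] {f : ℕ}
    (x : V → Fin f → ℝ) (a : V → V → ℝ)
    (hsymm : ∀ i j, a j i = a i j) (hnonneg : ∀ i j, 0 ≤ a i j)
    (hdiag : ∀ i, a i i = 0)
    (c : V → ℝ) (hc : ∀ i, 1 ≤ c i)
    (d : V → ℝ) (hd : ∀ i, d i = ∑ j, a j i)
    (u v : V) (huv : u ≠ v) :
    hmerge x a c d u v =
      ((c u + c v) / (d u + d v + c u + c v)) • xmerge x c u v +
        (1 / Real.sqrt (d u + d v + c u + c v)) •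
          (svec x a c d u - (a v u / Real.sqrt (d v + c v)) • x v +
            svec x a c d v - (a u v / Real.sqrt (d u + c u)) • x u) := by
  unfold hmerge svec
  congr 1
  congr 1
  have h1 : ({u} : Finset V)ᶜ = insert v (({u,v} : Finset V)ᶜ) := by
    ext j
    simp only [Finset.mem_compl, Finset.mem_insert, Finset.mem_singleton, not_or]
    constructor
    · intro h
      by_cases hj : j = v
      · exact Or.inl hj
      · exact Or.inr ⟨h, hj⟩
    · rintro (rfl | ⟨h, _⟩)
      · exact huv.symm
      · exact h
  have h2 : ({v} : Finset V)ᶜ = insert u (({u,v} : Finset V)ᶜ) := by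
    ext j
    simp only [Finset.mem_compl, Finset.mem_insert, Finset.mem_singleton, not_or]
    constructor
    · intro h
      by_cases hj : j = u
      · exact Or.inl hj
      · exact Or.inr ⟨hj, h⟩
    · rintro (rfl | ⟨_, h⟩)
      · exact huv
      · exact h
  have hv : v ∉ (({u,v} : Finset V)ᶜ) := by simp
  have hu : u ∉ (({u,v} : Finset V)ᶜ) := by simp
  rw [h1, h2, Finset.sum_insert hv, Finset.sum_insert hu]
  simp only [add_div, add_smul, Finset.sum_add_distrib]
  abel
end

section
/- Cached computation of a neighbor's post-merge representation: for every node i ∉ {u,v}, h' i = (c i/(d i + c i)) • x i + (1/√(d i + c i)) • s i + ((a u i + a v i)/√((d i + c i)(d u + d v + c u + c v))) • x_{uv} − (a u i/√((d i + c i)(d u + c u))) • x u − (a v i/√((d i + c i)(d v + c v))) • x v. -/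
open Finset

theorem cached_neighbor_representation
    {V : Type*} [Fintype V] [DecidableEq V] {f : ℕ}
    (x : V → Fin f → ℝ) (a : V → V → ℝ)
    (hsymm : ∀ i j, a j i = a i j) (hnonneg : ∀ i j, 0 ≤ a i j)
    (hdiag : ∀ i, a i i = 0)
    (c : V → ℝ) (hc : ∀ i, 1 ≤ c i)
    (d : V → ℝ) (hd : ∀ i, d i = ∑ j, a j i)
    (u v : V) (huv : u ≠ v)
    (i : V) (hiu : i ≠ u) (hiv : i ≠ v) :
    hpost x a c d u v i =
      (c i / (d i + c i)) • x i +
        (1 / Real.sqrt (d i + c i)) • svec x a c d i +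
        ((a u i + a v i) / Real.sqrt ((d i + c i) * (d u + d v + c u + c v))) •
          xmerge x c u v -
        (a u i / Real.sqrt ((d i + c i) * (d u + c u))) • x u -
        (a v i / Real.sqrt ((d i + c i) * (d v + c v))) • x v := by
  have hDnn : ∀ w : V, 0 ≤ d w + c w := by
    intro w
    have : 0 ≤ d w := by
      rw [hd]; exact Finset.sum_nonneg fun j _ => hnonneg j w
    linarith [hc w]
  have hsplit : ({i} : Finset V)ᶜ = insert u (insert v (({u, v, i} : Finset V)ᶜ)) := by
    ext j
    by_cases hju : j = u <;> by_cases hjv : j = v <;>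
      simp_all [eq_comm]
  have hu1 : u ∉ insert v (({u, v, i} : Finset V)ᶜ) := by simp [huv]
  have hv1 : v ∉ (({u, v, i} : Finset V)ᶜ) := by simp
  have hsum : svec x a c d i =
      (a u i / Real.sqrt (d u + c u)) • x u +
        ((a v i / Real.sqrt (d v + c v)) • x v +
          ∑ j ∈ ({u, v, i} : Finset V)ᶜ, (a j i / Real.sqrt (d j + c j)) • x j) := by
    rw [svec, hsplit, Finset.sum_insert hu1, Finset.sum_insert hv1]
  rw [hsum, hpost]
  have hmul : ∀ y : ℝ, 0 ≤ y →
      Real.sqrt ((d i + c i) * y) = Real.sqrt (d i + c i) * Real.sqrt y := by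
    intro y hy; exact Real.sqrt_mul (hDnn i) y
  rw [hmul _ (by linarith [hDnn u, hDnn v]), hmul _ (hDnn u), hmul _ (hDnn v)]
  funext k
  simp only [Pi.add_apply, Pi.sub_apply, Pi.smul_apply, smul_eq_mul]
  simp only [div_eq_mul_inv, mul_inv]
  ring
end
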